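/- arXiv:1807.03115 — 4 statements merged into one kernel-verified Lean document; each statement's English description precedes it below -/
import Mathlib

section
/- For every real s > -1, Γ(1+s) = exp(-γs + ∫_{-∞}^0 (e^{sx} - 1 - sx) dx/(|x|(e^{|x|}-1))), where γ is Euler's constant. In particular the integral converges absolutely. -/
open MeasureTheory Real Set Filter Topology

/-!
Substituting `x = -t` and expanding `1 / (exp t - 1) = ∑_{k ≥ 1} exp (-k t)` splits the integral
into the terms `∫_0^∞ (exp (-s t) - 1 + s t) exp (-k t) dt / t`. Writing such a term as
`∫_0^∞ (exp (-(k + s) t) - exp (-k t)) dt / t + s ∫_0^∞ exp (-k t) dt`, Frullani's integral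
evaluates it to `log (k / (k + s)) + s / k`. All terms are nonnegative, so the sum and the integral
may be interchanged, and the resulting series is `γ s + log Γ(1 + s)`: its partial sums are the
logarithms of Gauss's product for `Γ(1 + s)`, corrected by `s (H_n - log n) → γ s`.
-/

section Frullani

variable {a b : ℝ}

lemma exp_neg_mul_sub_exp_neg_mul_div_nonneg (hab : a ≤ b) {t : ℝ} (ht : 0 < t) :
    0 ≤ (exp (-a * t) - exp (-b * t)) / t := by
  have : exp (-b * t) ≤ exp (-a * t) := exp_le_exp.2 (by nlinarith)
  exact div_nonneg (sub_nonneg.2 this) ht.le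

lemma exp_neg_mul_sub_exp_neg_mul_div_le {t : ℝ} (ht : 0 < t) :
    (exp (-a * t) - exp (-b * t)) / t ≤ (b - a) * exp (-a * t) := by
  have hsplit : exp (-b * t) = exp (-a * t) * exp (-((b - a) * t)) := by
    rw [← exp_add]; ring_nf
  have := add_one_le_exp (-((b - a) * t))
  rw [div_le_iff₀ ht, hsplit]
  nlinarith [exp_pos (-a * t)]

lemma integrableOn_exp_neg_mul_sub_exp_neg_mul_div (ha : 0 < a) (hb : 0 < b) :
    IntegrableOn (fun t => (exp (-a * t) - exp (-b * t)) / t) (Ioi 0) := by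
  wlog hab : a ≤ b generalizing a b
  · exact (this hb ha (le_of_not_ge hab)).neg.congr_fun
      (fun t _ => by simp only [Pi.neg_apply]; ring) measurableSet_Ioi
  refine Integrable.mono' ((integrableOn_exp_mul_Ioi (neg_lt_zero.2 ha) 0).const_mul (b - a))
    (by fun_prop : Measurable _).aestronglyMeasurable ?_
  filter_upwards [ae_restrict_mem measurableSet_Ioi] with t ht
  rw [norm_of_nonneg (exp_neg_mul_sub_exp_neg_mul_div_nonneg hab ht)]
  exact exp_neg_mul_sub_exp_neg_mul_div_le ht

lemma integral_exp_neg_mul_sub_exp_neg_mul_div (ha : 0 < a) (hb : 0 < b) :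
    ∫ t in Ioi 0, (exp (-a * t) - exp (-b * t)) / t = log (b / a) := by
  have hf : Continuous fun x : ℝ => exp (-x) := by fun_prop
  have h := Frullani.integral_Ioi_eq (f := fun x => exp (-x)) (L := 1) (R := 0)
    (hf.locallyIntegrable.locallyIntegrableOn _) ha hb
    (by simpa using (hf.tendsto 0).mono_left nhdsWithin_le_nhds)
    tendsto_exp_neg_atTop_nhds_zero
  simp only [smul_eq_mul, sub_zero, mul_one, inv_mul_eq_div, ← neg_mul] at h
  exact h (integrableOn_exp_neg_mul_sub_exp_neg_mul_div ha hb)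

end Frullani

-- The integrand at `x = -t`, multiplied by `exp t - 1`.
noncomputable def malmstenKernel (s t : ℝ) : ℝ := (exp (-s * t) - 1 + s * t) / t

section malmstenKernel

variable {s c : ℝ}

lemma malmstenKernel_nonneg {t : ℝ} (ht : 0 ≤ t) : 0 ≤ malmstenKernel s t :=
  div_nonneg (by linarith [add_one_le_exp (-s * t)]) ht

lemma malmstenKernel_mul_exp_neg_mul {t : ℝ} (ht : t ≠ 0) :
    malmstenKernel s t * exp (-c * t)
      = (exp (-(c + s) * t) - exp (-c * t)) / t + s * exp (-c * t) := by
  have : exp (-(c + s) * t) = exp (-s * t) * exp (-c * t) := by rw [← exp_add]; ring_nf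
  rw [malmstenKernel, this]
  field_simp

lemma integrableOn_malmstenKernel_mul_exp_neg_mul (hc : 0 < c) (hcs : 0 < c + s) :
    IntegrableOn (fun t => malmstenKernel s t * exp (-c * t)) (Ioi 0) :=
  ((integrableOn_exp_neg_mul_sub_exp_neg_mul_div hcs hc).add
      ((integrableOn_exp_mul_Ioi (neg_lt_zero.2 hc) 0).const_mul s)).congr_fun
    (fun _ ht => (malmstenKernel_mul_exp_neg_mul (ne_of_gt ht)).symm) measurableSet_Ioi

lemma integral_malmstenKernel_mul_exp_neg_mul (hc : 0 < c) (hcs : 0 < c + s) :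
    ∫ t in Ioi 0, malmstenKernel s t * exp (-c * t) = s / c + log c - log (c + s) := by
  rw [setIntegral_congr_fun measurableSet_Ioi
      (fun _ ht => malmstenKernel_mul_exp_neg_mul (ne_of_gt ht)),
    integral_add (integrableOn_exp_neg_mul_sub_exp_neg_mul_div hcs hc)
      ((integrableOn_exp_mul_Ioi (neg_lt_zero.2 hc) 0).const_mul s),
    integral_exp_neg_mul_sub_exp_neg_mul_div hcs hc, integral_const_mul,
    integral_exp_mul_Ioi (neg_lt_zero.2 hc), log_div hc.ne' hcs.ne', mul_zero, exp_zero]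
  field_simp
  ring

end malmstenKernel

lemma hasSum_exp_neg_succ_mul {t : ℝ} (ht : 0 < t) :
    HasSum (fun k : ℕ => exp (-(k + 1) * t)) (exp t - 1)⁻¹ := by
  have hfun : (fun k : ℕ => exp (-(k + 1) * t)) = fun k => exp (-t) * exp (-t) ^ k := by
    ext k
    rw [← exp_nat_mul, ← exp_add]
    ring_nf
  have hsum : (exp t - 1)⁻¹ = exp (-t) * (1 - exp (-t))⁻¹ := by
    have : exp t - 1 ≠ 0 := (sub_pos.2 (one_lt_exp_iff.2 ht)).ne'
    rw [exp_neg]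
    field_simp
  rw [hfun, hsum]
  exact (hasSum_geometric_of_lt_one (exp_pos _).le (exp_lt_one_iff.2 (neg_lt_zero.2 ht))).mul_left _

section SeriesOfNonneg

variable {α : Type*} [MeasurableSpace α] {μ : Measure α} {f : ℕ → α → ℝ} {g : α → ℝ}

lemma hasSum_integral_of_nonneg (hf : ∀ n, Integrable (f n) μ) (hf0 : ∀ n, 0 ≤ᵐ[μ] f n)
    (hfg : ∀ᵐ x ∂μ, HasSum (f · x) (g x)) (hsum : Summable fun n => ∫ x, f n x ∂μ) :
    HasSum (fun n => ∫ x, f n x ∂μ) (∫ x, g x ∂μ) := by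
  have hnorm : ∀ n, ∫ x, ‖f n x‖ ∂μ = ∫ x, f n x ∂μ := fun n =>
    integral_congr_ae ((hf0 n).mono fun x hx => norm_of_nonneg hx)
  rw [integral_congr_ae (hfg.mono fun x hx => hx.tsum_eq.symm)]
  exact hasSum_integral_of_summable_integral_norm hf (by simpa only [hnorm] using hsum)

lemma integrable_of_hasSum_of_nonneg (hf : ∀ n, Integrable (f n) μ) (hf0 : ∀ n, 0 ≤ᵐ[μ] f n)
    (hfg : ∀ᵐ x ∂μ, HasSum (f · x) (g x)) (hsum : Summable fun n => ∫ x, f n x ∂μ) :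
    Integrable g μ := by
  have hf0' : ∀ᵐ x ∂μ, ∀ n, 0 ≤ f n x := ae_all_iff.2 hf0
  have hg0 : 0 ≤ᵐ[μ] g := by
    filter_upwards [hf0', hfg] with x hx hxg using hxg.nonneg hx
  refine ⟨aestronglyMeasurable_of_tendsto_ae atTop
    (fun s => Finset.aestronglyMeasurable_fun_sum s fun n _ => (hf n).1) hfg, ?_⟩
  rw [hasFiniteIntegral_iff_ofReal hg0]
  calc ∫⁻ x, ENNReal.ofReal (g x) ∂μ
      = ∫⁻ x, ∑' n, ENNReal.ofReal (f n x) ∂μ := by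
        refine lintegral_congr_ae ?_
        filter_upwards [hf0', hfg] with x hx hxg
        rw [← ENNReal.ofReal_tsum_of_nonneg hx hxg.summable, hxg.tsum_eq]
    _ = ∑' n, ENNReal.ofReal (∫ x, f n x ∂μ) := by
        rw [lintegral_tsum fun n => (hf n).aemeasurable.ennreal_ofReal]
        exact tsum_congr fun n => (ofReal_integral_eq_lintegral_ofReal (hf n) (hf0 n)).symm
    _ = ENNReal.ofReal (∑' n, ∫ x, f n x ∂μ) :=
        (ENNReal.ofReal_tsum_of_nonneg (fun n => integral_nonneg_of_ae (hf0 n)) hsum).symm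
    _ < ⊤ := ENNReal.ofReal_lt_top

end SeriesOfNonneg

lemma sum_range_div_add_log_sub_log {s : ℝ} (n : ℕ) :
    ∑ k ∈ Finset.range n, (s / (k + 1) + log (k + 1) - log (k + 1 + s))
      = s * (harmonic n - log n) + BohrMollerup.logGammaSeq (1 + s) n
        + (log (n + (1 + s)) - log n) := by
  induction n with
  | zero => simp [BohrMollerup.logGammaSeq]
  | succ n ih =>
    rw [Finset.sum_range_succ, ih, BohrMollerup.logGammaSeq, BohrMollerup.logGammaSeq,
      Finset.sum_range_succ _ (n + 1), Nat.factorial_succ, Nat.cast_mul,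
      log_mul (by positivity) (by positivity), harmonic_succ]
    push_cast
    ring_nf

lemma hasSum_log_Gamma_one_add {s : ℝ} (hs : -1 < s) :
    HasSum (fun k : ℕ => s / (k + 1) + log (k + 1) - log (k + 1 + s))
      (eulerMascheroniConstant * s + log (Gamma (1 + s))) := by
  have hterm (k : ℕ) : 0 ≤ s / (k + 1) + log (k + 1) - log (k + 1 + s) := by
    have hk : (0 : ℝ) < k + 1 := by positivity
    have h := log_le_sub_one_of_pos (div_pos (by linarith : (0 : ℝ) < k + 1 + s) hk)
    rw [log_div (by linarith) hk.ne'] at h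
    have : (k + 1 + s) / (k + 1) - 1 = s / (k + 1) := by field_simp; ring
    linarith
  rw [hasSum_iff_tendsto_nat_of_nonneg hterm]
  simp_rw [sum_range_div_add_log_sub_log]
  have h := ((tendsto_harmonic_sub_log.const_mul s).add
    (BohrMollerup.tendsto_log_gamma (by linarith : 0 < 1 + s))).add
    ((tendsto_log_comp_add_sub_log (1 + s)).comp tendsto_natCast_atTop_atTop)
  simpa only [add_zero, mul_comm s, Function.comp_def] using h

lemma malmsten_formula_Ioi {s : ℝ} (hs : -1 < s) :
    IntegrableOn (fun t => malmstenKernel s t / (exp t - 1)) (Ioi 0) ∧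
    ∫ t in Ioi 0, malmstenKernel s t / (exp t - 1)
      = eulerMascheroniConstant * s + log (Gamma (1 + s)) := by
  have hc (k : ℕ) : (0 : ℝ) < k + 1 := by positivity
  have hcs (k : ℕ) : (0 : ℝ) < k + 1 + s := by linarith [hc k]
  have hint (k : ℕ) := integrableOn_malmstenKernel_mul_exp_neg_mul (s := s) (hc k) (hcs k)
  have hsum : HasSum (fun k : ℕ => ∫ t in Ioi 0, malmstenKernel s t * exp (-(k + 1) * t))
      (eulerMascheroniConstant * s + log (Gamma (1 + s))) := by
    simpa only [integral_malmstenKernel_mul_exp_neg_mul (hc _) (hcs _)]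
      using hasSum_log_Gamma_one_add hs
  have hnonneg (k : ℕ) : 0 ≤ᵐ[volume.restrict (Ioi 0)]
      fun t => malmstenKernel s t * exp (-(k + 1) * t) := by
    filter_upwards [ae_restrict_mem measurableSet_Ioi] with t ht
    exact mul_nonneg (malmstenKernel_nonneg (le_of_lt ht)) (exp_pos _).le
  have hpoint : ∀ᵐ t ∂volume.restrict (Ioi 0), HasSum
      (fun k : ℕ => malmstenKernel s t * exp (-(k + 1) * t)) (malmstenKernel s t / (exp t - 1)) := by
    filter_upwards [ae_restrict_mem measurableSet_Ioi] with t ht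
    simpa only [← div_eq_mul_inv] using (hasSum_exp_neg_succ_mul ht).mul_left (malmstenKernel s t)
  exact ⟨integrable_of_hasSum_of_nonneg hint hnonneg hpoint hsum.summable,
    (hasSum_integral_of_nonneg hint hnonneg hpoint hsum.summable).unique hsum⟩

/-- Malmstén's formula for Γ(1+s), s > -1, with Euler's constant γ;
the integrand is absolutely integrable on (-∞,0). -/
theorem malmsten_formula (s : ℝ) (hs : -1 < s) :
    IntegrableOn
      (fun x : ℝ => (Real.exp (s * x) - 1 - s * x) / (|x| * (Real.exp |x| - 1)))
      (Set.Iio (0:ℝ)) ∧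
    Real.Gamma (1 + s) =
      Real.exp (-(Real.eulerMascheroniConstant) * s +
        ∫ x in Set.Iio (0:ℝ),
          (Real.exp (s * x) - 1 - s * x) / (|x| * (Real.exp |x| - 1))) := by
  have hneg : EqOn (fun t => malmstenKernel s t / (exp t - 1))
      (fun t => (exp (s * -t) - 1 - s * -t) / (|-t| * (exp |-t| - 1))) (Ioi 0) := by
    intro t ht
    simp only [malmstenKernel, abs_neg, abs_of_pos (mem_Ioi.1 ht), div_div]
    ring_nf
  obtain ⟨hint, hval⟩ := malmsten_formula_Ioi hs
  constructor
  · have h := hint.congr_fun hneg measurableSet_Ioi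
    rw [← neg_zero] at h
    simpa only [neg_neg] using h.comp_neg_Iio
  · rw [← integral_Iic_eq_integral_Iio, ← neg_zero, ← integral_comp_neg_Ioi,
      ← setIntegral_congr_fun measurableSet_Ioi hneg, hval, neg_mul, neg_add_cancel_left,
      exp_log (Gamma_pos_of_pos (by linarith))]
end

section
/- For every real s ≥ 0 and reals a, b > 0, Γ(a+s)Γ(a+b)/(Γ(a)Γ(a+b+s)) = exp(-∫_0^∞ (1 - e^{-s x}) · e^{-a x}(1 - e^{-b x})/(x(1 - e^{-x})) dx), and the integrand is nonnegative. -/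
/-!
Expanding `1 / (1 - e^{-x}) = ∑ⱼ e^{-jx}`, the integrand becomes a series whose `j`-th term is
`(e^{-(a+j)x} - e^{-(a+s+j)x}) / x` minus the same expression with `a` replaced by `a + b`. By
Frullani's formula each term integrates to `log ((a+s+j)/(a+j)) - log ((a+b+s+j)/(a+b+j))`, so the
exponential of minus the `n`-th partial integral is a finite product which is exactly the
corresponding ratio of Euler's products `GammaSeq` (the powers `n^s` cancel). Dominated convergence
on one side and Euler's limit formula `Γ = lim GammaSeq` on the other give the theorem.
-/

open MeasureTheory Set Real Filter Topology

lemma integrableOn_exp_neg_mul_sub_exp_neg_mul_div_s10 {p q : ℝ} (hp : 0 < p) (hq : 0 < q) :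
    IntegrableOn (fun x ↦ (exp (-(p * x)) - exp (-(q * x))) / x) (Ioi 0) := by
  wlog hpq : p ≤ q generalizing p q
  · refine (this hq hp (le_of_not_ge hpq)).neg.congr_fun (fun x _ ↦ ?_) measurableSet_Ioi
    rw [Pi.neg_apply, ← neg_div, neg_sub]
  have hbound : IntegrableOn (fun x ↦ (q - p) * exp (-p * x)) (Ioi 0) :=
    (exp_neg_integrableOn_Ioi 0 hp).const_mul _
  refine hbound.mono' (Measurable.aestronglyMeasurable (by fun_prop)) ?_
  filter_upwards [ae_restrict_mem measurableSet_Ioi] with x (hx : 0 < x)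
  -- `e^{-px} - e^{-qx} = e^{-px} (1 - e^{-(q-p)x}) ≤ (q - p) x e^{-px}`
  have hsplit : exp (-(q * x)) = exp (-(p * x)) * exp (-((q - p) * x)) := by
    rw [← exp_add]; ring_nf
  have hle : exp (-(q * x)) ≤ exp (-(p * x)) := exp_le_exp.2 (by nlinarith)
  have hlin := one_sub_le_exp_neg ((q - p) * x)
  rw [norm_div, Real.norm_of_nonneg (sub_nonneg.2 hle), Real.norm_of_nonneg hx.le,
    div_le_iff₀ hx, neg_mul, hsplit]
  nlinarith [exp_pos (-(p * x))]

theorem integral_exp_neg_mul_sub_exp_neg_mul_div_s10 {p q : ℝ} (hp : 0 < p) (hq : 0 < q) :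
    ∫ x in Ioi 0, (exp (-(p * x)) - exp (-(q * x))) / x = log (q / p) := by
  have hcont : Continuous fun x : ℝ ↦ exp (-x) := by fun_prop
  have hL : Tendsto (fun x : ℝ ↦ exp (-x)) (𝓝[>] 0) (𝓝 1) := by
    simpa using (hcont.tendsto 0).mono_left nhdsWithin_le_nhds
  have h := Frullani.integral_Ioi_eq (hcont.locallyIntegrable.locallyIntegrableOn _) hp hq hL
    tendsto_exp_neg_atTop_nhds_zero
  simp only [smul_eq_mul, sub_zero, mul_one, inv_mul_eq_div] at h
  exact h (integrableOn_exp_neg_mul_sub_exp_neg_mul_div_s10 hp hq)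

noncomputable def malmstenIntegrand (s a b x : ℝ) : ℝ :=
  (1 - exp (-(s * x))) * (exp (-(a * x)) * (1 - exp (-(b * x)))) / (x * (1 - exp (-x)))

section

variable {s a b x : ℝ}

lemma one_sub_exp_neg_nonneg {y : ℝ} (hy : 0 ≤ y) : 0 ≤ 1 - exp (-y) := by
  simpa using exp_le_one_iff.2 (neg_nonpos.2 hy)

lemma malmstenIntegrand_nonneg (hs : 0 ≤ s) (hb : 0 ≤ b) (hx : 0 < x) :
    0 ≤ malmstenIntegrand s a b x := by
  unfold malmstenIntegrand
  have := one_sub_exp_neg_nonneg (mul_nonneg hs hx.le)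
  have := one_sub_exp_neg_nonneg (mul_nonneg hb hx.le)
  have := one_sub_exp_neg_nonneg hx.le
  positivity

lemma malmstenIntegrand_le (hs : 0 ≤ s) (hb : 0 ≤ b) (hx : 0 < x) :
    malmstenIntegrand s a b x ≤ s * b * ((1 + x) * exp (-(a * x))) := by
  have hden : 0 < 1 - exp (-x) := by simpa using exp_lt_one_iff.2 (neg_lt_zero.2 hx)
  -- `x / (1 - e^{-x}) ≤ 1 + x` is `1 + x ≤ e^x` in disguise
  have hx_le : x ≤ (1 + x) * (1 - exp (-x)) := by
    have := mul_le_mul_of_nonneg_right (add_one_le_exp x) (exp_pos (-x)).le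
    rw [← exp_add, add_neg_cancel, exp_zero] at this
    nlinarith
  have hs' := one_sub_le_exp_neg (s * x)
  have hb' := one_sub_le_exp_neg (b * x)
  have hb0 := one_sub_exp_neg_nonneg (mul_nonneg hb hx.le)
  have hea := exp_pos (-(a * x))
  unfold malmstenIntegrand
  rw [div_le_iff₀ (mul_pos hx hden)]
  calc (1 - exp (-(s * x))) * (exp (-(a * x)) * (1 - exp (-(b * x))))
      ≤ (s * x) * (exp (-(a * x)) * (b * x)) := by gcongr <;> linarith
    _ = s * b * exp (-(a * x)) * x * x := by ring
    _ ≤ s * b * exp (-(a * x)) * x * ((1 + x) * (1 - exp (-x))) := by gcongr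
    _ = _ := by ring

lemma integrableOn_malmstenIntegrand (hs : 0 ≤ s) (ha : 0 < a) (hb : 0 ≤ b) :
    IntegrableOn (malmstenIntegrand s a b) (Ioi 0) := by
  have hbound : IntegrableOn (fun x ↦ s * b * ((1 + x) * exp (-(a * x)))) (Ioi 0) := by
    have h := integrableOn_rpow_mul_exp_neg_mul_rpow (s := 1) (p := 1) (by norm_num) one_pos ha
    simp only [rpow_one, neg_mul] at h
    exact (((exp_neg_integrableOn_Ioi 0 ha).add h).congr_fun
      (fun x _ ↦ by simp only [Pi.add_apply, neg_mul]; ring)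
      measurableSet_Ioi).const_mul _
  refine hbound.mono' (Measurable.aestronglyMeasurable (by unfold malmstenIntegrand; fun_prop)) ?_
  filter_upwards [ae_restrict_mem measurableSet_Ioi] with x (hx : 0 < x)
  rw [Real.norm_of_nonneg (malmstenIntegrand_nonneg hs hb hx)]
  exact malmstenIntegrand_le hs hb hx

lemma malmstenIntegrand_mul_one_sub_pow (hx : 0 < x) (n : ℕ) :
    malmstenIntegrand s a b x * (1 - exp (-x) ^ n) =
      ∑ j ∈ Finset.range n,
        ((exp (-((a + j) * x)) - exp (-((a + s + j) * x))) / x -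
          (exp (-((a + b + j) * x)) - exp (-((a + b + s + j) * x))) / x) := by
  have hden : 1 - exp (-x) ≠ 0 :=
    sub_ne_zero.2 (exp_lt_one_iff.2 (neg_lt_zero.2 hx)).ne'
  have hpow (j : ℕ) : exp (-(j * x)) = exp (-x) ^ j := by
    rw [← exp_nat_mul]; ring_nf
  simp only [add_mul, neg_add, exp_add, hpow, ← mul_neg_geom_sum (exp (-x)) n,
    malmstenIntegrand, Finset.mul_sum]
  refine Finset.sum_congr rfl fun j _ ↦ ?_
  field_simp

lemma integral_malmstenIntegrand_mul_one_sub_pow (hs : 0 ≤ s) (ha : 0 < a) (hb : 0 ≤ b) (n : ℕ) :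
    ∫ x in Ioi 0, malmstenIntegrand s a b x * (1 - exp (-x) ^ n) =
      ∑ j ∈ Finset.range n,
        (log ((a + s + j) / (a + j)) - log ((a + b + s + j) / (a + b + j))) := by
  have hpos (j : ℕ) : 0 < a + j ∧ 0 < a + s + j ∧ 0 < a + b + j ∧ 0 < a + b + s + j := by
    refine ⟨?_, ?_, ?_, ?_⟩ <;> positivity
  have hint (j : ℕ) :
      IntegrableOn (fun x ↦ (exp (-((a + j) * x)) - exp (-((a + s + j) * x))) / x) (Ioi 0) ∧
      IntegrableOn (fun x ↦ (exp (-((a + b + j) * x)) - exp (-((a + b + s + j) * x))) / x)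
        (Ioi 0) :=
    ⟨integrableOn_exp_neg_mul_sub_exp_neg_mul_div_s10 (hpos j).1 (hpos j).2.1,
      integrableOn_exp_neg_mul_sub_exp_neg_mul_div_s10 (hpos j).2.2.1 (hpos j).2.2.2⟩
  rw [setIntegral_congr_fun measurableSet_Ioi fun x hx ↦ malmstenIntegrand_mul_one_sub_pow hx n]
  refine (integral_finsetSum _ fun j _ ↦ ?_).trans (Finset.sum_congr rfl fun j _ ↦ ?_)
  · exact (hint j).1.sub (hint j).2
  · obtain ⟨h₁, h₂, h₃, h₄⟩ := hpos j
    rw [integral_sub (hint j).1 (hint j).2, integral_exp_neg_mul_sub_exp_neg_mul_div_s10 h₁ h₂,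
      integral_exp_neg_mul_sub_exp_neg_mul_div_s10 h₃ h₄]

lemma exp_neg_integral_malmstenIntegrand_mul_one_sub_pow (hs : 0 ≤ s) (ha : 0 < a) (hb : 0 ≤ b)
    (n : ℕ) :
    exp (-∫ x in Ioi 0, malmstenIntegrand s a b x * (1 - exp (-x) ^ n)) =
      ∏ j ∈ Finset.range n, (a + j) * (a + b + s + j) / ((a + s + j) * (a + b + j)) := by
  rw [integral_malmstenIntegrand_mul_one_sub_pow hs ha hb, ← Finset.sum_neg_distrib, exp_sum]
  refine Finset.prod_congr rfl fun j _ ↦ ?_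
  have : 0 < a + j := by positivity
  rw [neg_sub, exp_sub, exp_log (by positivity), exp_log (by positivity)]
  field_simp

end

lemma GammaSeq_mul_GammaSeq_div_GammaSeq_mul {x y z w : ℝ} (hx : 0 < x) (hy : 0 < y)
    (hz : 0 < z) (hw : 0 < w) (hxy : x + y = z + w) {n : ℕ} (hn : n ≠ 0) :
    GammaSeq x n * GammaSeq y n / (GammaSeq z n * GammaSeq w n) =
      ∏ j ∈ Finset.range (n + 1), (z + j) * (w + j) / ((x + j) * (y + j)) := by
  have hn' : (0 : ℝ) < n := by positivity
  have hprod {c : ℝ} (hc : 0 < c) : 0 < ∏ j ∈ Finset.range (n + 1), (c + j) :=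
    Finset.prod_pos fun j _ ↦ by positivity
  have hpow : (n : ℝ) ^ x * (n : ℝ) ^ y = (n : ℝ) ^ z * (n : ℝ) ^ w := by
    rw [← rpow_add hn', ← rpow_add hn', hxy]
  have := hprod hx
  have := hprod hy
  have := hprod hz
  have := hprod hw
  have := rpow_pos_of_pos hn' z
  have := rpow_pos_of_pos hn' w
  have : (0 : ℝ) < n.factorial := by positivity
  simp only [GammaSeq, Finset.prod_div_distrib, Finset.prod_mul_distrib]
  field_simp
  linear_combination hpow

theorem tendsto_integral_mul_one_sub_pow {α : Type*} [MeasurableSpace α] {μ : Measure α}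
    {f r : α → ℝ} (hf : Integrable f μ) (hr : AEStronglyMeasurable r μ)
    (hr1 : ∀ᵐ x ∂μ, |r x| < 1) :
    Tendsto (fun n : ℕ ↦ ∫ x, f x * (1 - r x ^ n) ∂μ) atTop (𝓝 (∫ x, f x ∂μ)) := by
  refine tendsto_integral_of_dominated_convergence (fun x ↦ 2 * ‖f x‖)
    (fun n ↦ hf.1.mul (aestronglyMeasurable_const.sub (hr.pow n))) (hf.norm.const_mul 2)
    (fun n ↦ ?_) ?_
  · filter_upwards [hr1] with x hx
    have : |r x| ^ n ≤ 1 := pow_le_one₀ (abs_nonneg _) hx.le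
    rw [norm_mul, mul_comm, Real.norm_eq_abs (1 - _)]
    gcongr
    calc |1 - r x ^ n| ≤ |1| + |r x ^ n| := abs_sub _ _
      _ ≤ 2 := by rw [abs_one, abs_pow]; linarith
  · filter_upwards [hr1] with x hx
    simpa using ((tendsto_pow_atTop_nhds_zero_of_abs_lt_one hx).const_sub 1).const_mul (f x)

/-- Malmstén-type formula for Beta moments: for s ≥ 0 and a, b > 0,
Γ(a+s)Γ(a+b)/(Γ(a)Γ(a+b+s)) = exp(-∫_0^∞ (1-e^{-sx}) e^{-ax}(1-e^{-bx})/(x(1-e^{-x})) dx),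
with a nonnegative integrand. -/
theorem beta_malmsten (s a b : ℝ) (hs : 0 ≤ s) (ha : 0 < a) (hb : 0 < b) :
    (∀ x ∈ Set.Ioi (0:ℝ), 0 ≤ (1 - Real.exp (-(s * x))) *
        (Real.exp (-(a * x)) * (1 - Real.exp (-(b * x)))) /
        (x * (1 - Real.exp (-x)))) ∧
    Real.Gamma (a + s) * Real.Gamma (a + b) /
        (Real.Gamma a * Real.Gamma (a + b + s)) =
      Real.exp (-∫ x in Set.Ioi (0:ℝ),
        (1 - Real.exp (-(s * x))) *
          (Real.exp (-(a * x)) * (1 - Real.exp (-(b * x)))) /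
          (x * (1 - Real.exp (-x)))) := by
  refine ⟨fun x hx ↦ malmstenIntegrand_nonneg hs hb.le hx, ?_⟩
  change _ = exp (-∫ x in Ioi 0, malmstenIntegrand s a b x)
  have hGamma := ((GammaSeq_tendsto_Gamma (a + s)).mul (GammaSeq_tendsto_Gamma (a + b))).div
    ((GammaSeq_tendsto_Gamma a).mul (GammaSeq_tendsto_Gamma (a + b + s)))
    (mul_pos (Gamma_pos_of_pos ha) (Gamma_pos_of_pos (by positivity))).ne'
  have hr : ∀ᵐ x ∂volume.restrict (Ioi (0 : ℝ)), |exp (-x)| < 1 := by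
    filter_upwards [ae_restrict_mem measurableSet_Ioi] with x (hx : 0 < x)
    rw [abs_of_pos (exp_pos _)]
    exact exp_lt_one_iff.2 (neg_lt_zero.2 hx)
  have hIntegral := tendsto_integral_mul_one_sub_pow (integrableOn_malmstenIntegrand hs ha hb.le)
    (by fun_prop) hr
  have hExp := ((continuous_exp.tendsto _).comp hIntegral.neg).comp (tendsto_add_atTop_nat 1)
  refine tendsto_nhds_unique (hGamma.congr' ?_) hExp
  filter_upwards [eventually_ne_atTop 0] with n hn
  rw [Pi.div_apply, Function.comp_apply, Function.comp_apply,
    exp_neg_integral_malmstenIntegrand_mul_one_sub_pow hs ha hb.le,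
    GammaSeq_mul_GammaSeq_div_GammaSeq_mul (by positivity) (by positivity) ha (by positivity)
      (by ring) hn]
end

section
/- Let a, b, s > 0 and μ_n = Γ(a+sn)Γ(a+b)/(Γ(a)Γ(a+b+sn)). Then μ_n → 0 as n → ∞, and for each t > 0 the series ∑_{n≥1} μ_n^{-t/(2n)} diverges. -/
/-!
Everything comes from the log-convexity of `Γ` on `(0, ∞)`. Increments of a convex function
are monotone, so `x ↦ Γ x / Γ (x + b)` is decreasing; hence `μ n ≤ μ 0 = 1` and every term
`μ n ^ (-t / (2 n))` of the Carleman sum is at least `1`. Comparing the slopes of `log ∘ Γ` on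
`[x - 1, x]` and `[x, x + b]` gives `(x - 1) ^ b * Γ x ≤ Γ (x + b)`, so `μ n = O((s n) ^ (-b)) → 0`.
-/

open Filter Real Set

theorem ConvexOn.map_add_sub_map_le_map_add_sub_map {s : Set ℝ} {f : ℝ → ℝ}
    (hf : ConvexOn ℝ s f) {x y h : ℝ} (hx : x ∈ s) (hyh : y + h ∈ s) (hxy : x ≤ y) (hh : 0 ≤ h) :
    f (x + h) - f x ≤ f (y + h) - f y := by
  rcases (add_nonneg (sub_nonneg.2 hxy) hh).eq_or_lt with hD | hD
  · obtain rfl : h = 0 := by linarith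
    obtain rfl : y = x := by linarith
    rfl
  -- `x + h` and `y` are the convex combinations of `x` and `y + h` with weights `(y - x, h)` and
  -- `(h, y - x)` (normalised), so adding the two convexity inequalities gives the claim
  have hw : 0 ≤ (y - x) / (y - x + h) := div_nonneg (by linarith) hD.le
  have hw' : 0 ≤ h / (y - x + h) := div_nonneg hh hD.le
  have hsum : (y - x) / (y - x + h) + h / (y - x + h) = 1 := by field_simp
  have h₁ := hf.2 hx hyh hw hw' hsum
  have h₂ := hf.2 hx hyh hw' hw (by rw [add_comm, hsum])
  simp only [smul_eq_mul] at h₁ h₂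
  rw [show (y - x) / (y - x + h) * x + h / (y - x + h) * (y + h) = x + h by field_simp; ring] at h₁
  rw [show h / (y - x + h) * x + (y - x) / (y - x + h) * (y + h) = y by field_simp; ring] at h₂
  linear_combination h₁ + h₂ + (f x + f (y + h)) * hsum

namespace Real

theorem antitoneOn_Gamma_div_Gamma_add {b : ℝ} (hb : 0 ≤ b) :
    AntitoneOn (fun x => Gamma x / Gamma (x + b)) (Ioi 0) := by
  intro x (hx : 0 < x) y (hy : 0 < y) hxy
  have hxb : 0 < x + b := by linarith
  have hyb : 0 < y + b := by linarith
  have key := convexOn_log_Gamma.map_add_sub_map_le_map_add_sub_map hx (mem_Ioi.2 hyb) hxy hb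
  simp only [Function.comp_apply] at key
  rw [div_le_div_iff₀ (Gamma_pos_of_pos hyb) (Gamma_pos_of_pos hxb),
    ← log_le_log_iff (mul_pos (Gamma_pos_of_pos hy) (Gamma_pos_of_pos hxb))
      (mul_pos (Gamma_pos_of_pos hx) (Gamma_pos_of_pos hyb)),
    log_mul (Gamma_pos_of_pos hy).ne' (Gamma_pos_of_pos hxb).ne',
    log_mul (Gamma_pos_of_pos hx).ne' (Gamma_pos_of_pos hyb).ne']
  linarith

theorem rpow_mul_Gamma_le_Gamma_add {x b : ℝ} (hx : 1 < x) (hb : 0 < b) :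
    (x - 1) ^ b * Gamma x ≤ Gamma (x + b) := by
  have hx₀ : 0 < x := by linarith
  have hx₁ : 0 < x - 1 := by linarith
  have hxb : 0 < x + b := by linarith
  have slope := convexOn_log_Gamma.slope_mono_adjacent (mem_Ioi.2 hx₁) (mem_Ioi.2 hxb)
    (sub_one_lt x) (lt_add_of_pos_right x hb)
  have hrec : log (Gamma x) = log (Gamma (x - 1)) + log (x - 1) := by
    rw [← log_mul (Gamma_pos_of_pos hx₁).ne' hx₁.ne', mul_comm, ← Gamma_add_one hx₁.ne',
      sub_add_cancel]
  simp only [Function.comp_apply, hrec, sub_sub_cancel, div_one, add_sub_cancel_left] at slope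
  rw [le_div_iff₀ hb] at slope
  rw [← log_le_log_iff (mul_pos (rpow_pos_of_pos hx₁ b) (Gamma_pos_of_pos hx₀))
    (Gamma_pos_of_pos hxb), log_mul (rpow_pos_of_pos hx₁ b).ne' (Gamma_pos_of_pos hx₀).ne',
    log_rpow hx₁]
  linarith

theorem tendsto_Gamma_div_Gamma_add_atTop {b : ℝ} (hb : 0 < b) :
    Tendsto (fun x => Gamma x / Gamma (x + b)) atTop (nhds 0) := by
  have hbound : Tendsto (fun x : ℝ => (x - 1) ^ (-b)) atTop (nhds 0) :=
    (tendsto_rpow_neg_atTop hb).comp (tendsto_atTop_add_const_right _ (-1) tendsto_id)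
  refine squeeze_zero' ?_ ?_ hbound
  · filter_upwards [eventually_gt_atTop 0] with x hx
    exact div_nonneg (Gamma_pos_of_pos hx).le (Gamma_pos_of_pos (by linarith)).le
  · filter_upwards [eventually_gt_atTop 1] with x hx
    have hx₁ : 0 < x - 1 := by linarith
    rw [div_le_iff₀ (Gamma_pos_of_pos (by linarith)), rpow_neg hx₁.le,
      le_inv_mul_iff₀ (rpow_pos_of_pos hx₁ b)]
    exact rpow_mul_Gamma_le_Gamma_add hx hb

end Real

theorem not_summable_rpow_of_le_one {u e : ℕ → ℝ} (hu₀ : ∀ n, 0 < u n) (hu₁ : ∀ n, u n ≤ 1)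
    (he : ∀ n, e n ≤ 0) : ¬ Summable (fun n => u n ^ e n) := fun hsum => by
  obtain ⟨n, hn⟩ := (hsum.tendsto_atTop_zero.eventually_lt_const one_pos).exists
  exact hn.not_ge (one_le_rpow_of_pos_of_le_one_of_nonpos (hu₀ n) (hu₁ n) (he n))

/-- For a,b,s > 0, the Beta-type moments μ_n = Γ(a+sn)Γ(a+b)/(Γ(a)Γ(a+b+sn))
tend to 0, and for every t > 0 the Carleman sum ∑ μ_n^{-t/(2n)} diverges. -/
theorem beta_moments_MD (a b s : ℝ) (ha : 0 < a) (hb : 0 < b) (hs : 0 < s)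
    (μ : ℕ → ℝ)
    (hμ : ∀ n : ℕ, μ n = Real.Gamma (a + s * n) * Real.Gamma (a + b) /
      (Real.Gamma a * Real.Gamma (a + b + s * n))) :
    Tendsto μ atTop (nhds 0) ∧
    ∀ t : ℝ, 0 < t →
      ¬ Summable (fun n : ℕ => μ (n + 1) ^ (-(t / (2 * ((n : ℝ) + 1))))) := by
  have hx : ∀ n : ℕ, 0 < a + s * n := fun n => by positivity
  have hΓa := Gamma_pos_of_pos ha
  have hΓab := Gamma_pos_of_pos (add_pos ha hb)
  have hμr : μ = fun n : ℕ =>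
      Gamma (a + s * n) / Gamma (a + s * n + b) / (Gamma a / Gamma (a + b)) := by
    ext n
    have := Gamma_pos_of_pos (add_pos (hx n) hb)
    rw [hμ, add_right_comm]; field_simp
  subst hμr
  constructor
  · have hlin : Tendsto (fun n : ℕ => a + s * n) atTop atTop :=
      tendsto_atTop_add_const_left _ a (tendsto_natCast_atTop_atTop.const_mul_atTop hs)
    simpa only [zero_div, Function.comp_def] using
      ((tendsto_Gamma_div_Gamma_add_atTop hb).comp hlin).div_const _
  · intro t ht
    refine not_summable_rpow_of_le_one (fun n => ?_) (fun n => ?_) (fun n => ?_)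
    · have := Gamma_pos_of_pos (hx (n + 1))
      have := Gamma_pos_of_pos (add_pos (hx (n + 1)) hb)
      positivity
    · rw [div_le_one (by positivity)]
      exact antitoneOn_Gamma_div_Gamma_add hb.le ha (hx _)
        (le_add_of_nonneg_right (by positivity))
    · exact neg_nonpos.2 (by positivity)
end

section
/- Let a, s, t > 0 and let μ_n = Γ(a+sn)/Γ(a) be the Gamma moment sequence. Then the Carleman sum ∑_{n≥1} μ_n^{-t/(2n)} diverges if and only if st ≤ 2. -/
open Real MeasureTheory Set

lemma gamma_log_lower {x : ℝ} (hx : 1 ≤ x) :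
    x * Real.log x - 2 * x ≤ Real.log (Real.Gamma x) := by
  have hx0 : (0:ℝ) < x := lt_of_lt_of_le one_pos hx
  have hsub : Ioc x (2*x) ⊆ Ioi (0:ℝ) := fun u hu => lt_trans hx0 hu.1
  have hint : IntegrableOn (fun u : ℝ => Real.exp (-u) * u ^ (x-1)) (Ioi 0) :=
    Real.GammaIntegral_convergent hx0
  have key : Real.exp (-(2*x)) * x ^ x ≤ Real.Gamma x := by
    rw [Real.Gamma_eq_integral hx0]
    have h1 : (∫ u in Ioc x (2*x), Real.exp (-u) * u ^ (x-1)) ≤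
        ∫ u in Ioi (0:ℝ), Real.exp (-u) * u ^ (x-1) := by
      refine setIntegral_mono_set hint ?_ (HasSubset.Subset.eventuallyLE hsub)
      filter_upwards [ae_restrict_mem measurableSet_Ioi] with u hu
      have hu0 : (0:ℝ) < u := hu
      positivity
    refine le_trans ?_ h1
    have h2 : (Real.exp (-(2*x)) * x ^ (x-1)) * (volume (Ioc x (2*x))).toReal ≤
        ∫ u in Ioc x (2*x), Real.exp (-u) * u ^ (x-1) := by
      refine setIntegral_ge_of_const_le_real measurableSet_Ioc
        (by rw [Real.volume_Ioc]; exact ENNReal.ofReal_ne_top) ?_ (hint.mono_set hsub)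
      intro u hu
      have hu1 : x ≤ u := hu.1.le
      have hu2 : u ≤ 2*x := hu.2
      have e1 : Real.exp (-(2*x)) ≤ Real.exp (-u) := Real.exp_le_exp.mpr (by linarith)
      have e2 : x ^ (x-1) ≤ u ^ (x-1) := Real.rpow_le_rpow hx0.le hu1 (by linarith)
      exact mul_le_mul e1 e2 (Real.rpow_nonneg hx0.le _) (Real.exp_pos _).le
    rw [Real.volume_Ioc] at h2
    have hvol : (ENNReal.ofReal (2*x - x)).toReal = x := by
      rw [ENNReal.toReal_ofReal (by linarith)]; ring
    rw [hvol] at h2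
    refine le_trans (le_of_eq ?_) h2
    rw [mul_assoc]
    congr 1
    rw [← Real.rpow_add_one hx0.ne' (x-1)]
    norm_num
  have hpos : (0:ℝ) < Real.exp (-(2*x)) * x ^ x := by positivity
  have hlog := (Real.log_le_log_iff hpos (Real.Gamma_pos_of_pos hx0)).mpr key
  rw [Real.log_mul (Real.exp_pos _).ne' (Real.rpow_pos_of_pos hx0 _).ne', Real.log_exp,
    Real.log_rpow hx0] at hlog
  linarith

lemma gamma_log_upper {x : ℝ} (hx : 2 ≤ x) :
    Real.log (Real.Gamma x) ≤ x * Real.log x := by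
  have hx0 : (0:ℝ) < x := by linarith
  have hx1 : (1:ℝ) ≤ x := by linarith
  set N := ⌈x⌉₊ with hN
  have hxN : x ≤ (N:ℝ) := Nat.le_ceil x
  have hN1 : 1 ≤ N := by
    have h : (1:ℝ) ≤ (N:ℝ) := le_trans hx1 hxN
    exact_mod_cast h
  have hNx : ((N:ℝ)) < x + 1 := Nat.ceil_lt_add_one hx0.le
  have hsub : ((N-1:ℕ):ℝ) = (N:ℝ) - 1 := by
    push_cast [Nat.cast_sub hN1]; ring
  have hle : ((N-1:ℕ):ℝ) ≤ x := by rw [hsub]; linarith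
  have hkey : Real.Gamma x ≤ x ^ x := by
    have h1 : Real.Gamma x ≤ Real.Gamma (N:ℝ) := by
      rcases eq_or_lt_of_le hxN with h | h
      · rw [h]
      · exact (Real.Gamma_strictMonoOn_Ici (Set.mem_Ici.mpr hx)
          (Set.mem_Ici.mpr (le_trans hx hxN)) h).le
    have h2 : Real.Gamma (N:ℝ) = ((Nat.factorial (N-1) : ℕ) : ℝ) := by
      have hNeq : ((N:ℝ)) = ((N-1:ℕ):ℝ) + 1 := by rw [hsub]; ring
      rw [hNeq, Real.Gamma_nat_eq_factorial]
    have h3 : ((Nat.factorial (N-1) : ℕ) : ℝ) ≤ x ^ x := by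
      calc ((Nat.factorial (N-1) : ℕ) : ℝ) ≤ ((N-1:ℕ):ℝ) ^ ((N-1:ℕ)) := by
            exact_mod_cast Nat.factorial_le_pow (N-1)
        _ ≤ x ^ ((N-1:ℕ)) := pow_le_pow_left₀ (Nat.cast_nonneg _) hle _
        _ = x ^ (((N-1:ℕ)):ℝ) := (Real.rpow_natCast x _).symm
        _ ≤ x ^ x := Real.rpow_le_rpow_of_exponent_le hx1 hle
    calc Real.Gamma x ≤ Real.Gamma (N:ℝ) := h1
      _ = ((Nat.factorial (N-1) : ℕ) : ℝ) := h2
      _ ≤ x ^ x := h3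
  have hlog := (Real.log_le_log_iff (Real.Gamma_pos_of_pos hx0)
    (Real.rpow_pos_of_pos hx0 _)).mpr hkey
  rwa [Real.log_rpow hx0] at hlog

lemma carleman_upper_bound (a s t : ℝ) (ha : 0 < a) (hs : 0 < s) (ht : 0 < t)
    {m : ℝ} (hm : 1 ≤ m) (hsm : 1 ≤ s * m) :
    (Real.Gamma (a + s * m) / Real.Gamma a) ^ (-(t / (2 * m))) ≤
      Real.exp (t*(s+a) + (t/2)*|Real.log (Real.Gamma a)| + (t*s/2)*|Real.log s|) *
        m ^ (-(s*t/2)) := by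
  have hm0 : (0:ℝ) < m := lt_of_lt_of_le one_pos hm
  have hx0 : (0:ℝ) < a + s*m := by positivity
  have hx1 : (1:ℝ) ≤ a + s*m := by nlinarith
  have hΓa : 0 < Real.Gamma a := Real.Gamma_pos_of_pos ha
  have hΓx : 0 < Real.Gamma (a+s*m) := Real.Gamma_pos_of_pos hx0
  set L := Real.log (Real.Gamma (a+s*m)) with hLdef
  set la := Real.log (Real.Gamma a) with hladef
  set lm := Real.log m with hlmdef
  set ls := Real.log s with hlsdef
  set c := t/(2*m) with hcdef
  have hc0 : 0 < c := by positivity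
  have hcm : c * m = t/2 := by rw [hcdef]; field_simp
  have hcle : c ≤ t/2 := by
    have h := mul_le_mul_of_nonneg_left hm hc0.le
    rw [mul_one, hcm] at h; exact h
  have hlmn : 0 ≤ lm := Real.log_nonneg hm
  have hlsm : Real.log (s*m) = ls + lm := Real.log_mul hs.ne' hm0.ne'
  have hlsm0 : 0 ≤ ls + lm := by rw [← hlsm]; exact Real.log_nonneg hsm
  have hlogx : ls + lm ≤ Real.log (a+s*m) := by
    rw [← hlsm]
    exact (Real.log_le_log_iff (by positivity) hx0).mpr (by linarith)
  have hlogx0 : 0 ≤ Real.log (a+s*m) := le_trans hlsm0 hlogx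
  have hA : (a+s*m) * Real.log (a+s*m) - 2*(a+s*m) ≤ L := gamma_log_lower hx1
  have hB : (s*m) * (ls+lm) ≤ (a+s*m) * Real.log (a+s*m) := by
    have s1 : (s*m) * (ls+lm) ≤ (s*m) * Real.log (a+s*m) :=
      mul_le_mul_of_nonneg_left hlogx (by positivity)
    have s2 : (s*m) * Real.log (a+s*m) ≤ (a+s*m) * Real.log (a+s*m) :=
      mul_le_mul_of_nonneg_right (by linarith) hlogx0
    linarith
  have hfd : (Real.Gamma (a + s*m) / Real.Gamma a) ^ (-(t/(2*m))) =
      Real.exp ((L - la) * (-c)) := by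
    rw [Real.rpow_def_of_pos (div_pos hΓx hΓa), Real.log_div hΓx.ne' hΓa.ne']
  have hrd : m ^ (-(s*t/2)) = Real.exp (lm * (-(s*t/2))) := Real.rpow_def_of_pos hm0 _
  rw [hfd, hrd, ← Real.exp_add]
  refine Real.exp_le_exp.mpr ?_
  have hAc : c*((a+s*m)*Real.log (a+s*m)) - c*(2*(a+s*m)) ≤ c*L := by
    have h := mul_le_mul_of_nonneg_left hA hc0.le
    nlinarith [h]
  have hBc : (t/2)*(s*(ls+lm)) ≤ c*((a+s*m)*Real.log (a+s*m)) := by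
    have h := mul_le_mul_of_nonneg_left hB hc0.le
    have heq : c*((s*m)*(ls+lm)) = (t/2)*(s*(ls+lm)) := by
      rw [show c*((s*m)*(ls+lm)) = (c*m)*(s*(ls+lm)) from by ring, hcm]
    linarith
  have hCc : c*(2*(a+s*m)) ≤ t*(s+a) := by
    have h1 : c*(2*(s*m)) = t*s := by
      rw [show c*(2*(s*m)) = (c*m)*(2*s) from by ring, hcm]; ring
    have h2 : c*(2*a) ≤ t*a := by nlinarith
    nlinarith
  have hDc : c*la ≤ (t/2)*|la| := by
    have h1 : c*la ≤ c*|la| := mul_le_mul_of_nonneg_left (le_abs_self la) hc0.le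
    have h2 : c*|la| ≤ (t/2)*|la| := mul_le_mul_of_nonneg_right hcle (abs_nonneg la)
    linarith
  have hEc : -((t*s/2)*ls) ≤ (t*s/2)*|ls| := by
    have h1 : -ls ≤ |ls| := neg_le_abs ls
    have h2 : (t*s/2)*(-ls) ≤ (t*s/2)*|ls| := mul_le_mul_of_nonneg_left h1 (by positivity)
    linarith
  linarith [hAc, hBc, hCc, hDc, hEc, hlmn]

lemma carleman_lower_bound (a s t : ℝ) (ha : 0 < a) (hs : 0 < s) (ht : 0 < t) (hst : s*t ≤ 2)
    {m : ℝ} (hm : 1 ≤ m) (hx2 : 2 ≤ a + s*m) :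
    Real.exp (-((t/2)*|Real.log (Real.Gamma a)| + (t/2)*(a*(s+a)) +
        (t*s/2)*|Real.log (s+a)|)) * m ^ (-(1:ℝ)) ≤
      (Real.Gamma (a + s * m) / Real.Gamma a) ^ (-(t / (2 * m))) := by
  have hm0 : (0:ℝ) < m := lt_of_lt_of_le one_pos hm
  have hx0 : (0:ℝ) < a + s*m := by positivity
  have hΓa : 0 < Real.Gamma a := Real.Gamma_pos_of_pos ha
  have hΓx : 0 < Real.Gamma (a+s*m) := Real.Gamma_pos_of_pos hx0
  set L := Real.log (Real.Gamma (a+s*m)) with hLdef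
  set la := Real.log (Real.Gamma a) with hladef
  set lm := Real.log m with hlmdef
  set c := t/(2*m) with hcdef
  have hc0 : 0 < c := by positivity
  have hcm : c * m = t/2 := by rw [hcdef]; field_simp
  have hcle : c ≤ t/2 := by
    have h := mul_le_mul_of_nonneg_left hm hc0.le
    rw [mul_one, hcm] at h; exact h
  have hlmn : 0 ≤ lm := Real.log_nonneg hm
  have hA : L ≤ (a+s*m)*Real.log (a+s*m) := gamma_log_upper hx2
  have hxle : a + s*m ≤ (s+a)*m := by nlinarith
  have hlogx_le : Real.log (a+s*m) ≤ Real.log (s+a) + lm := by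
    have heq : Real.log ((s+a)*m) = Real.log (s+a) + lm :=
      Real.log_mul (by positivity) hm0.ne'
    rw [← heq]
    exact (Real.log_le_log_iff hx0 (by positivity)).mpr hxle
  have hlogx_lt : Real.log (a+s*m) ≤ (s+a)*m := by
    have := Real.log_le_sub_one_of_pos hx0
    linarith
  have hfd : (Real.Gamma (a + s*m) / Real.Gamma a) ^ (-(t/(2*m))) =
      Real.exp ((L - la) * (-c)) := by
    rw [Real.rpow_def_of_pos (div_pos hΓx hΓa), Real.log_div hΓx.ne' hΓa.ne']
  have hrd : m ^ (-(1:ℝ)) = Real.exp (lm * (-(1:ℝ))) := Real.rpow_def_of_pos hm0 _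
  rw [hfd, hrd, ← Real.exp_add]
  refine Real.exp_le_exp.mpr ?_
  have F1 : c*L ≤ c*((a+s*m)*Real.log (a+s*m)) := mul_le_mul_of_nonneg_left hA hc0.le
  have F2 : c*((a+s*m)*Real.log (a+s*m)) =
      c*(a*Real.log (a+s*m)) + (t*s/2)*Real.log (a+s*m) := by
    rw [show c*((a+s*m)*Real.log (a+s*m)) =
      c*(a*Real.log (a+s*m)) + (c*m)*(s*Real.log (a+s*m)) from by ring, hcm]
    ring
  have F3 : c*(a*Real.log (a+s*m)) ≤ (t/2)*(a*(s+a)) := by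
    have h1 : a*Real.log (a+s*m) ≤ a*((s+a)*m) := mul_le_mul_of_nonneg_left hlogx_lt ha.le
    have h2 : c*(a*Real.log (a+s*m)) ≤ c*(a*((s+a)*m)) := mul_le_mul_of_nonneg_left h1 hc0.le
    have h3 : c*(a*((s+a)*m)) = (t/2)*(a*(s+a)) := by
      rw [show c*(a*((s+a)*m)) = (c*m)*(a*(s+a)) from by ring, hcm]
    linarith
  have F4 : (t*s/2)*Real.log (a+s*m) ≤ (t*s/2)*|Real.log (s+a)| + lm := by
    have h1 : (t*s/2)*Real.log (a+s*m) ≤ (t*s/2)*(Real.log (s+a) + lm) :=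
      mul_le_mul_of_nonneg_left hlogx_le (by positivity)
    have h2 : (t*s/2)*Real.log (s+a) ≤ (t*s/2)*|Real.log (s+a)| :=
      mul_le_mul_of_nonneg_left (le_abs_self _) (by positivity)
    have h3 : (t*s/2)*lm ≤ 1*lm := mul_le_mul_of_nonneg_right (by nlinarith) hlmn
    nlinarith
  have F5 : -((t/2)*|la|) ≤ c*la := by
    have h1 : c*(-|la|) ≤ c*la := mul_le_mul_of_nonneg_left (neg_abs_le la) hc0.le
    have h2 : c*|la| ≤ (t/2)*|la| := mul_le_mul_of_nonneg_right hcle (abs_nonneg la)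
    nlinarith
  linarith [F1, F2, F3, F4, F5]

/-- For the Gamma moment sequence μ_n = Γ(a+sn)/Γ(a) with a, s, t > 0, the
Carleman sum ∑ μ_n^{-t/(2n)} diverges iff st ≤ 2. -/
theorem gamma_sequence_carleman (a s t : ℝ) (ha : 0 < a) (hs : 0 < s) (ht : 0 < t) :
    (¬ Summable (fun n : ℕ =>
        (Real.Gamma (a + s * ((n : ℝ) + 1)) / Real.Gamma a) ^
          (-(t / (2 * ((n : ℝ) + 1)))))) ↔ s * t ≤ 2 := by
  set f : ℕ → ℝ := fun n => (Real.Gamma (a + s * ((n : ℝ) + 1)) / Real.Gamma a) ^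
    (-(t / (2 * ((n : ℝ) + 1)))) with hfdef
  have hfpos : ∀ n, 0 < f n := fun n =>
    Real.rpow_pos_of_pos (div_pos (Real.Gamma_pos_of_pos (by positivity))
      (Real.Gamma_pos_of_pos ha)) _
  constructor
  · intro hdiv
    by_contra hgt
    push_neg at hgt
    apply hdiv
    set N := ⌈1/s⌉₊ with hN
    rw [← summable_nat_add_iff (f := f) N]
    have hbound : ∀ n : ℕ, f (n + N) ≤
        Real.exp (t*(s+a) + (t/2)*|Real.log (Real.Gamma a)| + (t*s/2)*|Real.log s|) *
          ((n:ℝ)+1) ^ (-(s*t/2)) := by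
      intro n
      have hm : (1:ℝ) ≤ ((n + N : ℕ):ℝ) + 1 := by
        have := Nat.cast_nonneg (α := ℝ) (n + N); linarith
      have hNle : (N:ℝ) ≤ ((n+N:ℕ):ℝ) + 1 := by
        push_cast
        have := Nat.cast_nonneg (α := ℝ) n; linarith
      have hsm : (1:ℝ) ≤ s * (((n + N : ℕ):ℝ) + 1) := by
        have h1 : (1/s) ≤ (N:ℝ) := Nat.le_ceil _
        have h3 : 1/s ≤ ((n+N:ℕ):ℝ)+1 := le_trans h1 hNle
        calc (1:ℝ) = s * (1/s) := by field_simp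
          _ ≤ s * (((n + N : ℕ):ℝ) + 1) := mul_le_mul_of_nonneg_left h3 hs.le
      have hb := carleman_upper_bound a s t ha hs ht hm hsm
      refine le_trans hb ?_
      have hmono : ((((n+N:ℕ):ℝ))+1) ^ (-(s*t/2)) ≤ ((n:ℝ)+1) ^ (-(s*t/2)) := by
        apply Real.rpow_le_rpow_of_nonpos (by positivity) ?_ (by nlinarith)
        push_cast
        have := Nat.cast_nonneg (α := ℝ) N; linarith
      exact mul_le_mul_of_nonneg_left hmono (Real.exp_pos _).le
    refine Summable.of_nonneg_of_le (fun n => (hfpos _).le) hbound ?_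
    apply Summable.mul_left
    have h1 : Summable (fun n : ℕ => ((n:ℝ)) ^ (-(s*t/2))) :=
      Real.summable_nat_rpow.mpr (by linarith)
    have h2 := (summable_nat_add_iff 1).mpr h1
    refine h2.congr fun n => ?_
    push_cast
    ring_nf
  · intro hst hsum
    set N := ⌈2/s⌉₊ with hN
    have hs2 : Summable (fun n => f (n + N)) := (summable_nat_add_iff N).mpr hsum
    set C2 := Real.exp (-((t/2)*|Real.log (Real.Gamma a)| + (t/2)*(a*(s+a)) +
      (t*s/2)*|Real.log (s+a)|)) with hC2
    have hC2pos : 0 < C2 := Real.exp_pos _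
    have hbound : ∀ n : ℕ, C2 * (((n+N:ℕ):ℝ)+1) ^ (-(1:ℝ)) ≤ f (n + N) := by
      intro n
      have hm : (1:ℝ) ≤ ((n + N : ℕ):ℝ) + 1 := by
        have := Nat.cast_nonneg (α := ℝ) (n + N); linarith
      have hNle : (N:ℝ) ≤ ((n+N:ℕ):ℝ) + 1 := by
        push_cast
        have := Nat.cast_nonneg (α := ℝ) n; linarith
      have hx2 : (2:ℝ) ≤ a + s * (((n + N : ℕ):ℝ) + 1) := by
        have h1 : (2/s) ≤ (N:ℝ) := Nat.le_ceil _
        have h3 : 2/s ≤ ((n+N:ℕ):ℝ)+1 := le_trans h1 hNle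
        have h4 : s * (2/s) ≤ s * (((n + N : ℕ):ℝ) + 1) := mul_le_mul_of_nonneg_left h3 hs.le
        have h5 : s * (2/s) = 2 := by field_simp
        nlinarith
      exact carleman_lower_bound a s t ha hs ht hst hm hx2
    have hsum2 : Summable (fun n : ℕ => C2 * (((n+N:ℕ):ℝ)+1) ^ (-(1:ℝ))) :=
      Summable.of_nonneg_of_le (fun n => by positivity) hbound hs2
    have hsum3 : Summable (fun n : ℕ => ((n + (N+1) : ℕ):ℝ)⁻¹) := by
      have h := hsum2.mul_left C2⁻¹
      refine h.congr fun n => ?_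
      rw [← mul_assoc, inv_mul_cancel₀ hC2pos.ne', one_mul, Real.rpow_neg_one]
      congr 1
      push_cast
      ring
    exact Real.not_summable_natCast_inv ((summable_nat_add_iff (N+1)).mp hsum3)
end
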